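/- arXiv:2001.01418 — 5 statements merged into one kernel-verified Lean document; each statement's English description precedes it below -/
import Mathlib

section
/- Let S = K[x_1,…,x_s], R = K[y_1,…,y_r], m and n their graded maximal ideals, I ⊆ m^2 and J ⊆ n^2 graded ideals, H = I + mn in T = S ⊗_K R, and F = I + J + mn. Then for every positive integer k, F^k = H^k + Σ_{i=1}^{k} (mn)^{k-i} J^i. -/
/-!
Ideals of a commutative ring form an idempotent commutative semiring, and the argument takes place
there. With `M = mn`, the hypotheses `I ⊆ m²` and `J ⊆ n²` give `I J ⊆ M²` in `T`. Induction on
`k` then shows `(M + I + J)^k = (M + I)^k + (M + J)^k`: the new mixed terms `(M + I)^k J` and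
`(M + J)^k I` are absorbed because `I J ⊆ M²` trades each factor `I J` for `M²`. Finally, every
binomial coefficient is `1` in an idempotent semiring, so `(M + J)^k = ∑ M^(k-i) J^i`, and its term
`M^k` is absorbed by `H^k = (I + M)^k`.
-/

open MvPolynomial TensorProduct

noncomputable section

variable (K : Type) [Field K] (s r : ℕ)

/-- The extension of an ideal of `S` to `T = S ⊗_K R`. -/
def extIdealLeft (I : Ideal (MvPolynomial (Fin s) K)) :
    Ideal (MvPolynomial (Fin s) K ⊗[K] MvPolynomial (Fin r) K) :=
  Ideal.map
    (Algebra.TensorProduct.includeLeft :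
      MvPolynomial (Fin s) K →ₐ[K] MvPolynomial (Fin s) K ⊗[K] MvPolynomial (Fin r) K) I

/-- The extension of an ideal of `R` to `T = S ⊗_K R`. -/
def extIdealRight (J : Ideal (MvPolynomial (Fin r) K)) :
    Ideal (MvPolynomial (Fin s) K ⊗[K] MvPolynomial (Fin r) K) :=
  Ideal.map
    (Algebra.TensorProduct.includeRight :
      MvPolynomial (Fin r) K →ₐ[K] MvPolynomial (Fin s) K ⊗[K] MvPolynomial (Fin r) K) J

/-- The graded maximal ideal `(x₁,…,x_s)` of a polynomial ring. -/
def maxGradedIdeal (N : ℕ) : Ideal (MvPolynomial (Fin N) K) :=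
  Ideal.span (Set.range (X : Fin N → MvPolynomial (Fin N) K))

section IdemCommSemiring

variable {α : Type*} [IdemCommSemiring α]

theorem add_pow_eq_sum_pow_mul_pow (a b : α) (n : ℕ) :
    (a + b) ^ n = ∑ i ∈ Finset.range (n + 1), a ^ i * b ^ (n - i) := by
  rw [add_pow]
  refine Finset.sum_congr rfl fun i hi => ?_
  rw [natCast_eq_one (Nat.choose_pos (Finset.mem_range_succ_iff.mp hi)).ne', mul_one]

theorem add_pow_eq_pow_add_sum_Icc (m b : α) (k : ℕ) :
    (m + b) ^ k = m ^ k + ∑ i ∈ Finset.Icc 1 k, m ^ (k - i) * b ^ i := by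
  rw [add_comm m, add_pow_eq_sum_pow_mul_pow, Nat.range_succ_eq_Icc_zero,
    ← Finset.sum_Ioc_add_eq_sum_Icc (Nat.zero_le k), add_comm, ← Finset.Icc_add_one_left_eq_Ioc]
  simp only [zero_add, pow_zero, one_mul, Nat.sub_zero, mul_comm (b ^ _)]

theorem pow_mul_le_pow_succ_add_of_mul_le_sq {m x y : α} (hxy : x * y ≤ m ^ 2) (k : ℕ) :
    (m + x) ^ k * y ≤ (m + x) ^ (k + 1) + m ^ k * y := by
  induction k with
  | zero => simp
  | succ k ih =>
    have hm : m ^ (k + 2) ≤ (m + x) ^ (k + 2) := pow_le_pow_left' le_self_add _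
    calc (m + x) ^ (k + 1) * y = (m + x) * ((m + x) ^ k * y) := by ring
      _ ≤ (m + x) * ((m + x) ^ (k + 1) + m ^ k * y) := by gcongr
      _ = (m + x) ^ (k + 2) + m ^ k * (x * y) + m ^ (k + 1) * y := by ring
      _ ≤ (m + x) ^ (k + 2) + m ^ (k + 2) + m ^ (k + 1) * y := by
        grw [hxy, ← pow_add, add_comm k 2]
      _ = (m + x) ^ (k + 2) + m ^ (k + 1) * y := by rw [hm.add_eq_left]

theorem add_add_pow_eq_of_mul_le_sq {m a b : α} (hab : a * b ≤ m ^ 2) (k : ℕ) :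
    (m + a + b) ^ k = (m + a) ^ k + (m + b) ^ k := by
  refine le_antisymm ?_ (add_le (pow_le_pow_left' le_self_add k) ?_)
  · induction k with
    | zero => simp
    | succ k ih =>
      have hpow (c : α) : m ^ k * c ≤ (m + c) ^ (k + 1) := by
        rw [pow_succ]; exact mul_le_mul' (pow_le_pow_left' le_self_add k) le_add_self
      have hb : (m + a) ^ k * b ≤ (m + a) ^ (k + 1) + (m + b) ^ (k + 1) :=
        (pow_mul_le_pow_succ_add_of_mul_le_sq hab k).trans (by grw [hpow b])
      have ha : (m + b) ^ k * a ≤ (m + a) ^ (k + 1) + (m + b) ^ (k + 1) := by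
        rw [add_comm ((m + a) ^ _)]
        exact (pow_mul_le_pow_succ_add_of_mul_le_sq ((mul_comm b a).trans_le hab) k).trans
          (by grw [hpow a])
      calc (m + a + b) ^ (k + 1) ≤ ((m + a) ^ k + (m + b) ^ k) * (m + a + b) := by
            rw [pow_succ]; gcongr
        _ = (m + a) ^ (k + 1) + (m + b) ^ (k + 1) + ((m + a) ^ k * b + (m + b) ^ k * a) := by
            ring
        _ ≤ (m + a) ^ (k + 1) + (m + b) ^ (k + 1) := add_le le_rfl (add_le hb ha)
  · exact pow_le_pow_left' (by rw [add_right_comm]; exact le_self_add) k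

theorem add_add_pow_eq_pow_add_sum_of_mul_le_sq {m a b : α} (hab : a * b ≤ m ^ 2) (k : ℕ) :
    (a + b + m) ^ k = (a + m) ^ k + ∑ i ∈ Finset.Icc 1 k, m ^ (k - i) * b ^ i := by
  have hm : m ^ k ≤ (a + m) ^ k := pow_le_pow_left' le_add_self k
  rw [show a + b + m = m + a + b by abel, add_add_pow_eq_of_mul_le_sq hab,
    add_pow_eq_pow_add_sum_Icc m b, ← add_assoc, add_comm m a, hm.add_eq_left]

end IdemCommSemiring

theorem fiberProduct_power_decomposition
    (I : Ideal (MvPolynomial (Fin s) K)) (J : Ideal (MvPolynomial (Fin r) K))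
    (hI : I ≤ (maxGradedIdeal K s) ^ 2) (hJ : J ≤ (maxGradedIdeal K r) ^ 2)
    (k : ℕ) :
    (extIdealLeft K s r I + extIdealRight K s r J +
        extIdealLeft K s r (maxGradedIdeal K s) * extIdealRight K s r (maxGradedIdeal K r)) ^ k =
      (extIdealLeft K s r I +
          extIdealLeft K s r (maxGradedIdeal K s) * extIdealRight K s r (maxGradedIdeal K r)) ^ k +
        ∑ i ∈ Finset.Icc 1 k,
          (extIdealLeft K s r (maxGradedIdeal K s) *
              extIdealRight K s r (maxGradedIdeal K r)) ^ (k - i) *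
            (extIdealRight K s r J) ^ i := by
  have hIm : extIdealLeft K s r I ≤ extIdealLeft K s r (maxGradedIdeal K s) ^ 2 :=
    (Ideal.map_mono hI).trans_eq (Ideal.map_pow _ _ _)
  have hJn : extIdealRight K s r J ≤ extIdealRight K s r (maxGradedIdeal K r) ^ 2 :=
    (Ideal.map_mono hJ).trans_eq (Ideal.map_pow _ _ _)
  have hIJ : extIdealLeft K s r I * extIdealRight K s r J ≤
      (extIdealLeft K s r (maxGradedIdeal K s) * extIdealRight K s r (maxGradedIdeal K r)) ^ 2 :=
    (Ideal.mul_mono hIm hJn).trans_eq (mul_pow (M := Ideal _) _ _ 2).symm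
  exact add_add_pow_eq_pow_add_sum_of_mul_le_sq
    (α := Ideal (MvPolynomial (Fin s) K ⊗[K] MvPolynomial (Fin r) K)) hIJ k

end
end

section
/- With S, R, m, n, I ⊆ m^2, J ⊆ n^2, H = I + mn and F = I + J + mn as above, set G_0 = H^k and G_t = H^k + Σ_{i=1}^{t} (mn)^{k-i} J^i for 1 ≤ t ≤ k. Then for each 1 ≤ t ≤ k one has the intersection formula G_{t-1} ∩ (mn)^{k-t} J^t = m^{k-t+1} n^{k-t} J^t. -/
/-!
Write `a, b, i, j` for the extensions of `m, n, I, J` to `T`. Since `I ⊆ m`, all of `G_{t-1}`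
lies in `a^{k-t+1}`, while `(mn)^{k-t} J^t` lies in `B T` for `B = n^{k-t} J^t`. Identifying
`T` with `R[x_1,…,x_s]`, the ideal `a^e` consists of the polynomials supported in `x`-degree
`≥ e` and `B T` of those with all coefficients in `B`; both conditions are read off monomial by
monomial, so `a^e ∩ B T = a^e · B T`. Conversely, `J ⊆ n` trades one factor `J` for a factor
`n`, which puts `m^{k-t+1} n^{k-t} J^t` inside `(mn)^{k-t+1} J^{t-1}`, a summand of `G_{t-1}`
(part of `H^k` when `t = 1`).
-/

open MvPolynomial TensorProduct

noncomputable section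

variable (K : Type) [Field K] (s r : ℕ)

namespace MvPolynomial

variable {σ R : Type*} [CommRing R]

theorem pow_idealOfVars_inf_map_C (B : Ideal R) (e : ℕ) :
    idealOfVars σ R ^ e ⊓ B.map C = idealOfVars σ R ^ e * B.map C := by
  refine le_antisymm (fun p hp => ?_) Ideal.mul_le_inf
  obtain ⟨hpV, hpB⟩ := Ideal.mem_inf.1 hp
  rw [p.as_sum]
  refine Ideal.sum_mem _ fun d hd => ?_
  rw [← mul_one (coeff d p), ← C_mul_monomial, mul_comm (C _)]
  refine Ideal.mul_mem_mul ((mem_pow_idealOfVars_iff _ _).2 fun x hx => ?_)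
    (Ideal.mem_map_of_mem _ (mem_map_C_iff.1 hpB d))
  rw [Finset.mem_singleton.1 (support_monomial_subset hx)]
  exact (mem_pow_idealOfVars_iff _ _).1 hpV d hd

end MvPolynomial

theorem Ideal.map_inf_of_equiv {R S : Type*} [Semiring R] [Semiring S] (e : R ≃+* S)
    (I J : Ideal R) : (I ⊓ J).map e = I.map e ⊓ J.map e := by
  simp only [← Ideal.comap_symm, Ideal.comap_inf]

section TensorProduct

open Algebra.TensorProduct

variable (σ R A : Type*) [CommRing R] [CommRing A] [Algebra R A]

def MvPolynomial.tensorAlgEquiv : MvPolynomial σ R ⊗[R] A ≃ₐ[R] MvPolynomial σ A :=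
  (Algebra.TensorProduct.comm R _ A).trans ((algebraTensorAlgEquiv R A).restrictScalars R)

@[simp] lemma MvPolynomial.tensorAlgEquiv_symm_X (i : σ) :
    (tensorAlgEquiv σ R A).symm (X i) = X i ⊗ₜ 1 := by
  simp [tensorAlgEquiv]

@[simp] lemma MvPolynomial.tensorAlgEquiv_symm_C (a : A) :
    (tensorAlgEquiv σ R A).symm (C a) = 1 ⊗ₜ a := by
  rw [AlgEquiv.symm_apply_eq]
  simp [tensorAlgEquiv, Algebra.smul_def]

theorem pow_map_includeLeft_idealOfVars_inf_map_includeRight (B : Ideal A) (e : ℕ) :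
    (idealOfVars σ R).map (includeLeft : _ →ₐ[R] _ ⊗[R] A) ^ e ⊓ B.map includeRight =
      (idealOfVars σ R).map (includeLeft : _ →ₐ[R] _ ⊗[R] A) ^ e * B.map includeRight := by
  set ψ := (tensorAlgEquiv σ R A).symm.toRingEquiv
  have hvars : (idealOfVars σ R).map (includeLeft : _ →ₐ[R] _ ⊗[R] A) =
      (idealOfVars σ A).map ψ := by
    simp only [Ideal.map_span, ← Set.range_comp]
    congr 2
    ext i
    simp [ψ]
  have hcoeff : B.map (includeRight : A →ₐ[R] MvPolynomial σ R ⊗[R] A) =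
      (B.map C).map ψ := by
    change B.map (includeRight : A →ₐ[R] _).toRingHom = (B.map C).map ψ.toRingHom
    rw [Ideal.map_map]
    congr 1
    ext a
    simp [ψ]
  rw [hvars, hcoeff, ← Ideal.map_pow, ← Ideal.map_inf_of_equiv, pow_idealOfVars_inf_map_C,
    Ideal.map_mul]

end TensorProduct

section IdealArithmetic

variable {T : Type*} [CommSemiring T] {a b i j : Ideal T} {k t : ℕ}

theorem pow_add_sum_le_pow (hi : i ≤ a) (ht : 1 ≤ t) (htk : t ≤ k) :
    (i + a * b) ^ k + ∑ q ∈ Finset.Icc 1 (t - 1), (a * b) ^ (k - q) * j ^ q ≤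
      a ^ (k - t + 1) := by
  refine add_le ?_ ?_
  · calc (i + a * b) ^ k ≤ a ^ k := Ideal.pow_right_mono (add_le hi Ideal.mul_le_left) k
      _ ≤ a ^ (k - t + 1) := Ideal.pow_le_pow_right (by omega)
  · rw [Ideal.sum_eq_sup]
    refine Finset.sup_le fun q hq => ?_
    calc (a * b) ^ (k - q) * j ^ q ≤ a ^ (k - q) :=
          Ideal.mul_le_left.trans (Ideal.pow_right_mono Ideal.mul_le_left _)
      _ ≤ a ^ (k - t + 1) := Ideal.pow_le_pow_right (by grind)

theorem pow_succ_mul_pow_mul_pow_succ_le (hj : j ≤ b) (c u : ℕ) :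
    a ^ (c + 1) * b ^ c * j ^ (u + 1) ≤ (a * b) ^ (c + 1) * j ^ u :=
  calc a ^ (c + 1) * b ^ c * j ^ (u + 1) = a ^ (c + 1) * (b ^ c * j) * j ^ u := by ring
    _ ≤ a ^ (c + 1) * (b ^ c * b) * j ^ u := by gcongr
    _ = (a * b) ^ (c + 1) * j ^ u := by ring

theorem pow_mul_pow_mul_pow_le_pow_add_sum (hj : j ≤ b) (ht : 1 ≤ t) (htk : t ≤ k) :
    a ^ (k - t + 1) * b ^ (k - t) * j ^ t ≤
      (i + a * b) ^ k + ∑ q ∈ Finset.Icc 1 (t - 1), (a * b) ^ (k - q) * j ^ q := by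
  obtain ⟨u, rfl⟩ : ∃ u, t = u + 1 := ⟨t - 1, by omega⟩
  refine (pow_succ_mul_pow_mul_pow_succ_le hj _ u).trans ?_
  rcases Nat.eq_zero_or_pos u with rfl | hu
  · rw [pow_zero, mul_one, show k - (0 + 1) + 1 = k by omega]
    exact (Ideal.pow_right_mono le_add_self k).trans le_self_add
  · rw [show k - (u + 1) + 1 = k - u by omega, Ideal.sum_eq_sup]
    exact le_add_left (Finset.le_sup (f := fun q => (a * b) ^ (k - q) * j ^ q)
      (Finset.mem_Icc.2 ⟨hu, by omega⟩))

theorem pow_add_sum_inf_eq (hi : i ≤ a) (hj : j ≤ b) (ht : 1 ≤ t) (htk : t ≤ k)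
    (hkey : a ^ (k - t + 1) ⊓ b ^ (k - t) * j ^ t ≤ a ^ (k - t + 1) * (b ^ (k - t) * j ^ t)) :
    ((i + a * b) ^ k + ∑ q ∈ Finset.Icc 1 (t - 1), (a * b) ^ (k - q) * j ^ q) ⊓
        ((a * b) ^ (k - t) * j ^ t) = a ^ (k - t + 1) * b ^ (k - t) * j ^ t := by
  refine le_antisymm ?_ (le_inf (pow_mul_pow_mul_pow_le_pow_add_sum hj ht htk) ?_)
  · rw [mul_assoc]
    refine le_trans (inf_le_inf (pow_add_sum_le_pow hi ht htk) ?_) hkey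
    rw [mul_pow]
    exact Ideal.mul_mono_left Ideal.mul_le_right
  · rw [mul_pow]
    exact Ideal.mul_mono_left (Ideal.mul_mono_left (Ideal.pow_le_pow_right (Nat.le_succ _)))

end IdealArithmetic

theorem fiberProduct_power_intersection
    (I : Ideal (MvPolynomial (Fin s) K)) (J : Ideal (MvPolynomial (Fin r) K))
    (hI : I ≤ (maxGradedIdeal K s) ^ 2) (hJ : J ≤ (maxGradedIdeal K r) ^ 2)
    (k : ℕ) (t : ℕ) (ht1 : 1 ≤ t) (htk : t ≤ k) :
    ((extIdealLeft K s r I +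
          extIdealLeft K s r (maxGradedIdeal K s) * extIdealRight K s r (maxGradedIdeal K r)) ^ k +
        ∑ i ∈ Finset.Icc 1 (t - 1),
          (extIdealLeft K s r (maxGradedIdeal K s) *
              extIdealRight K s r (maxGradedIdeal K r)) ^ (k - i) *
            (extIdealRight K s r J) ^ i) ⊓
      ((extIdealLeft K s r (maxGradedIdeal K s) *
          extIdealRight K s r (maxGradedIdeal K r)) ^ (k - t) * (extIdealRight K s r J) ^ t) =
      (extIdealLeft K s r (maxGradedIdeal K s)) ^ (k - t + 1) *
        (extIdealRight K s r (maxGradedIdeal K r)) ^ (k - t) * (extIdealRight K s r J) ^ t := by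
  have hi : extIdealLeft K s r I ≤ extIdealLeft K s r (maxGradedIdeal K s) :=
    Ideal.map_mono (hI.trans (Ideal.pow_le_self two_ne_zero))
  have hj : extIdealRight K s r J ≤ extIdealRight K s r (maxGradedIdeal K r) :=
    Ideal.map_mono (hJ.trans (Ideal.pow_le_self two_ne_zero))
  refine pow_add_sum_inf_eq hi hj ht1 htk (le_of_eq ?_)
  have hcoeff : extIdealRight K s r (maxGradedIdeal K r) ^ (k - t) * extIdealRight K s r J ^ t =
      extIdealRight K s r (maxGradedIdeal K r ^ (k - t) * J ^ t) := by
    simp only [extIdealRight, Ideal.map_mul, Ideal.map_pow]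
  rw [hcoeff, extIdealLeft, extIdealRight]
  exact pow_map_includeLeft_idealOfVars_inf_map_includeRight (Fin s) K _
    (maxGradedIdeal K r ^ (k - t) * J ^ t) (k - t + 1)

end
end

section
/- Let S = K[x_1,…,x_s] and R = K[y_1,…,y_r] with s, r > 2, m, n their graded maximal ideals, and T = K[x_1,…,x_s,y_1,…,y_r]. Then a_1(T/(m^k n^k)) = 2k − 2 for every positive integer k, where a_1 is computed with respect to the maximal graded ideal m + n of T. -/
open MvPolynomial

variable (K : Type) [Field K] {N : ℕ}

/-- The "negative support" `G_α = {i : α i < 0}` of an exponent vector `α ∈ ℤ^N`. -/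
def negSupp (α : Fin N → ℤ) : Finset (Fin N) :=
  Finset.univ.filter (fun i => α i < 0)

/-- The multiplicative set generated by the variables `x_i`, `i ∈ W`. -/
noncomputable def varMonoid (W : Finset (Fin N)) : Submonoid (MvPolynomial (Fin N) K) :=
  Submonoid.closure ((fun i => (X i : MvPolynomial (Fin N) K)) '' ↑W)

/-- The Laurent monomial `x^α` in the localization `S[x_i^{-1} : i ∈ W]`,
for `α ∈ ℤ^N` whose negative support is contained in `W`. -/
noncomputable def xPow (α : Fin N → ℤ) (W : Finset (Fin N)) (h : negSupp α ⊆ W) :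
    Localization (varMonoid K W) :=
  algebraMap (MvPolynomial (Fin N) K) _ (∏ i, X i ^ (α i).toNat) *
    IsLocalization.mk' (Localization (varMonoid K W)) (1 : MvPolynomial (Fin N) K)
      (⟨∏ i ∈ negSupp α, X i ^ (-(α i)).toNat,
        Submonoid.prod_mem _ (fun i hi =>
          pow_mem (Submonoid.subset_closure
            (Set.mem_image_of_mem _ (Finset.mem_coe.mpr (h hi)))) _)⟩ : varMonoid K W)

/-- The degree complex `Δ_α(I)` of a monomial ideal `I`:
`F ∈ Δ_α(I)` iff `F ⊆ [N] ∖ G_α` and `x^α ∉ I·S[x_i^{-1} : i ∈ F ∪ G_α]`. -/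
def degreeComplex (I : Ideal (MvPolynomial (Fin N) K)) (α : Fin N → ℤ) :
    Set (Finset (Fin N)) :=
  {F | Disjoint F (negSupp α) ∧
    xPow K α (F ∪ negSupp α) (Finset.subset_union_right) ∉
      Ideal.map (algebraMap (MvPolynomial (Fin N) K)
        (Localization (varMonoid K (F ∪ negSupp α)))) I}

/-- The module of simplicial `K`-chains of `Δ` spanned by the faces of cardinality `m`. -/
abbrev chainModule (Δ : Set (Finset (Fin N))) (m : ℕ) : Type :=
  {F : Finset (Fin N) // F ∈ Δ ∧ F.card = m} →₀ K

open Classical in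
/-- The simplicial boundary map from `m`-cardinality+1 chains to `m`-cardinality chains,
sending a face `F` to `∑_{i ∈ F} (-1)^{|{j ∈ F : j < i}|} (F ∖ {i})`. -/
noncomputable def bdry (Δ : Set (Finset (Fin N))) (m : ℕ) :
    chainModule K Δ (m + 1) →ₗ[K] chainModule K Δ m :=
  Finsupp.lsum K (fun F =>
    ∑ i ∈ F.1.attach,
      ((-1 : K) ^ (F.1.filter (fun j => j < i.1)).card) •
        (if h : (F.1.erase i.1) ∈ Δ then
          Finsupp.lsingle (⟨F.1.erase i.1, h, by
            simp [Finset.card_erase_of_mem i.2, F.2.2]⟩ :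
              {G : Finset (Fin N) // G ∈ Δ ∧ G.card = m})
        else 0))

/-- The full boundary map `∂_m : C_m → C_{m-1}`, with `∂_0 = 0`. -/
noncomputable def bdryFrom (Δ : Set (Finset (Fin N))) :
    (m : ℕ) → (chainModule K Δ m →ₗ[K] chainModule K Δ (m - 1))
  | 0 => 0
  | (n + 1) => bdry K Δ n

/-- The reduced simplicial homology `H̃_{m-1}(Δ; K) = ker ∂_m / im ∂_{m+1}`,
indexed by the cardinality level `m` (so dimension `m - 1`). -/
noncomputable def homologyAtLevel (Δ : Set (Finset (Fin N))) (m : ℕ) : Type :=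
  letI : HasQuotient (LinearMap.ker (bdryFrom K Δ m))
      (Submodule K (LinearMap.ker (bdryFrom K Δ m))) := Submodule.hasQuotient (R := K)
        (M := LinearMap.ker (bdryFrom K Δ m))
  LinearMap.ker (bdryFrom K Δ m) ⧸
    Submodule.comap (LinearMap.ker (bdryFrom K Δ m)).subtype
      (LinearMap.range (bdry K Δ m))

/-- `H̃_d(Δ; K) ≠ 0`, for an arbitrary integer dimension `d`
(nonzero is only possible when `d ≥ -1`). -/
def reducedHomologyNonzero (Δ : Set (Finset (Fin N))) (d : ℤ) : Prop :=
  ∃ m : ℕ, (m : ℤ) = d + 1 ∧ Nontrivial (homologyAtLevel K Δ m)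

/-- The Stanley–Reisner ideal of `Δ`, generated by the squarefree monomials
`x_F = ∏_{i ∈ F} x_i` over the non-faces `F` of `Δ`. -/
noncomputable def stanleyReisner (Δ : Set (Finset (Fin N))) : Ideal (MvPolynomial (Fin N) K) :=
  Ideal.span {f | ∃ F : Finset (Fin N), F ∉ Δ ∧ f = ∏ i ∈ F, X i}

/-- The monomial prime `P_F = (x_i : i ∉ F)`. -/
noncomputable def facePrime (F : Finset (Fin N)) : Ideal (MvPolynomial (Fin N) K) :=
  Ideal.span {f | ∃ i : Fin N, i ∉ F ∧ f = X i}

/-- The set of facets (maximal faces) of `Δ`. -/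
def facets (Δ : Set (Finset (Fin N))) : Set (Finset (Fin N)) :=
  {F | F ∈ Δ ∧ ∀ G ∈ Δ, F ⊆ G → F = G}

/-- `Δ` is a simplicial complex: closed under taking subsets. -/
def DownClosed (Δ : Set (Finset (Fin N))) : Prop :=
  ∀ F ∈ Δ, ∀ G : Finset (Fin N), G ⊆ F → G ∈ Δ

/-- The `n`-th symbolic power `I_Δ^{(n)} = ⋂_{F facet of Δ} P_F^n`
of the Stanley–Reisner ideal of `Δ`. -/
noncomputable def symbolicPowerSR (Δ : Set (Finset (Fin N))) (n : ℕ) : Ideal (MvPolynomial (Fin N) K) :=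
  ⨅ F ∈ facets Δ, (facePrime K F) ^ n

/-- The simplicial complex `Δ(I) = {F : x_F ∉ √I}` attached to a monomial ideal `I`. -/
def complexOfIdeal (I : Ideal (MvPolynomial (Fin N) K)) : Set (Finset (Fin N)) :=
  {F | (∏ i ∈ F, X i) ∉ I.radical}

/-- The set of degrees `t` in which the `i`-th graded local cohomology module
`H^i_m(S/I)_t` of a monomial quotient is nonzero; by Takayama's formula this is
expressed through the degree complexes: `H^i_m(S/I)_α ≠ 0` iff `G_α ∈ Δ(I)` and
`H̃_{i - |G_α| - 1}(Δ_α(I); K) ≠ 0`. -/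
def localCohNonzeroDegrees (i : ℕ) (I : Ideal (MvPolynomial (Fin N) K)) : Set ℤ :=
  {t | ∃ α : Fin N → ℤ, (∑ j, α j) = t ∧ negSupp α ∈ complexOfIdeal K I ∧
    reducedHomologyNonzero K (degreeComplex K I α) ((i : ℤ) - (negSupp α).card - 1)}

/-- The `a_i`-invariant `a_i(S/I) = max {t : H^i_m(S/I)_t ≠ 0}` of a monomial quotient,
via Takayama's formula. -/
noncomputable def aInvariant (i : ℕ) (I : Ideal (MvPolynomial (Fin N) K)) : ℤ :=
  sSup (localCohNonzeroDegrees K i I)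

/-- The link of a face `G` in `Δ`. -/
def link (Δ : Set (Finset (Fin N))) (G : Finset (Fin N)) : Set (Finset (Fin N)) :=
  {F | Disjoint F G ∧ F ∪ G ∈ Δ}

/-- The pure `k`-skeleton of `Γ`: the subcomplex generated by the
`k`-dimensional (i.e. `(k+1)`-element) faces of `Γ`. -/
def pureSkeleton (Γ : Set (Finset (Fin N))) (k : ℕ) : Set (Finset (Fin N)) :=
  {F | ∃ G ∈ Γ, G.card = k + 1 ∧ F ⊆ G}

/-!
Only exponents `α` with `|G_α| ≤ 1` contribute to `H¹`. Let `a` and `b` be the `x`- and `y`-degrees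
of the positive part of `α`. After inverting the variables in `W`, the Laurent monomial `x^α` lies
in `m^k n^l` iff (`k ≤ a` or `W` contains an `x`-variable) and (`l ≤ b` or `W` contains a
`y`-variable): inverting a variable of a block makes that block's ideal the unit ideal, and
conversely the specialisation `x_i ↦ t`, `y_j ↦ 1`, which factors through the localization when `W`
has no `x`-variable, sends `m^k n^l` into `(t^k)` and `x^α` to `t^a`.

So when `|G_α| = 1` and `∅` is a face of the degree complex, so is some vertex (each block has at
least two variables), and `H̃₋₁ = 0`. When `G_α = ∅` the degree complex is the disjoint union of
the full simplices on the `x`- and on the `y`-variables if `a < k` and `b < l`, and a single simplex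
or empty otherwise; hence `H̃₀ ≠ 0` forces `deg α = a + b ≤ k + l - 2`, with equality at
`α = (k - 1) e_{x₁} + (l - 1) e_{y₁}`.
-/

open Finset

noncomputable def varIdeal (B : Finset (Fin N)) : Ideal (MvPolynomial (Fin N) K) :=
  Ideal.span {f | ∃ i ∈ B, f = X i}

noncomputable def weightHom (B : Finset (Fin N)) : MvPolynomial (Fin N) K →ₐ[K] Polynomial K :=
  aeval fun i => if i ∈ B then Polynomial.X else 1

section Localization
variable {K} {B W : Finset (Fin N)}

theorem X_mem_varIdeal {i : Fin N} (hi : i ∈ B) :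
    (X i : MvPolynomial (Fin N) K) ∈ varIdeal K B :=
  Ideal.subset_span ⟨i, hi, rfl⟩

theorem X_mem_varMonoid {i : Fin N} (hi : i ∈ W) :
    (X i : MvPolynomial (Fin N) K) ∈ varMonoid K W :=
  Submonoid.subset_closure (Set.mem_image_of_mem _ hi)

theorem prod_X_pow_mem_varIdeal_pow {c : Fin N → ℕ} {n : ℕ} (hn : n ≤ ∑ i ∈ B, c i) :
    ∏ i ∈ B, (X i : MvPolynomial (Fin N) K) ^ c i ∈ varIdeal K B ^ n := by
  refine Ideal.pow_le_pow_right hn ?_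
  rw [← prod_pow_eq_pow_sum]
  exact Ideal.prod_mem_prod fun i hi => Ideal.pow_mem_pow (X_mem_varIdeal hi) _

theorem map_varIdeal_eq_top {u : Fin N} (huB : u ∈ B) (huW : u ∈ W) :
    (varIdeal K B).map (algebraMap (MvPolynomial (Fin N) K) (Localization (varMonoid K W))) = ⊤ :=
  Ideal.eq_top_of_isUnit_mem _ (Ideal.mem_map_of_mem _ (X_mem_varIdeal huB))
    (IsLocalization.map_units _ (⟨X u, X_mem_varMonoid huW⟩ : varMonoid K W))

theorem algebraMap_prod_X_pow_mem_map_pow {c : Fin N → ℕ} {n : ℕ}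
    (h : n ≤ ∑ i ∈ B, c i ∨ ¬ Disjoint W B) :
    algebraMap (MvPolynomial (Fin N) K) (Localization (varMonoid K W)) (∏ i ∈ B, X i ^ c i) ∈
      (varIdeal K B).map
        (algebraMap (MvPolynomial (Fin N) K) (Localization (varMonoid K W))) ^ n := by
  rcases h with hn | hWB
  · rw [← Ideal.map_pow]
    exact Ideal.mem_map_of_mem _ (prod_X_pow_mem_varIdeal_pow hn)
  · obtain ⟨u, huW, huB⟩ := not_disjoint_iff.mp hWB
    rw [map_varIdeal_eq_top huB huW, Ideal.top_pow]
    exact Submodule.mem_top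

theorem weightHom_X (i : Fin N) :
    weightHom K B (X i) = if i ∈ B then Polynomial.X else 1 := aeval_X _ _

theorem weightHom_eq_one_of_mem_varMonoid (hWB : Disjoint W B) {f : MvPolynomial (Fin N) K}
    (hf : f ∈ varMonoid K W) : weightHom K B f = 1 := by
  induction hf using Submonoid.closure_induction with
  | mem f hf =>
    obtain ⟨i, hi, rfl⟩ := hf
    rw [weightHom_X, if_neg (disjoint_left.mp hWB hi)]
  | one => exact map_one _
  | mul f g _ _ hf hg => rw [map_mul, hf, hg, one_mul]

theorem map_weightHom_pow_mul_le (k : ℕ) (J : Ideal (MvPolynomial (Fin N) K)) :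
    (varIdeal K B ^ k * J).map (weightHom K B) ≤ Ideal.span {Polynomial.X ^ k} := by
  refine (Ideal.map_mono Ideal.mul_le_left).trans ?_
  rw [Ideal.map_pow, ← Ideal.span_singleton_pow]
  refine Ideal.pow_right_mono ?_ k
  rw [varIdeal, Ideal.map_span, Ideal.span_le]
  rintro _ ⟨_, ⟨i, hi, rfl⟩, rfl⟩
  simp [weightHom_X, hi]

theorem weightHom_prod_X_pow (c : Fin N → ℕ) :
    weightHom K B (∏ i, X i ^ c i) = Polynomial.X ^ ∑ i ∈ B, c i := by
  simp only [map_prod, map_pow, weightHom_X, ite_pow, one_pow]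
  rw [prod_ite_mem, univ_inter, prod_pow_eq_pow_sum]

theorem xPow_notMem_map_pow_mul {α : Fin N → ℤ} (h : negSupp α ⊆ W) {k : ℕ}
    (J : Ideal (MvPolynomial (Fin N) K)) (hWB : Disjoint W B)
    (hk : ∑ i ∈ B, (α i).toNat < k) :
    xPow K α W h ∉ (varIdeal K B ^ k * J).map
      (algebraMap (MvPolynomial (Fin N) K) (Localization (varMonoid K W))) := by
  set L := Localization (varMonoid K W)
  have hunit (d : varMonoid K W) : IsUnit (weightHom K B d) := by
    rw [weightHom_eq_one_of_mem_varMonoid hWB d.2]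
    exact isUnit_one
  let ψ : L →+* Polynomial K := IsLocalization.lift (g := (weightHom K B).toRingHom) hunit
  have hψ_mk' (d : varMonoid K W) : ψ (IsLocalization.mk' L 1 d) = 1 := by
    have := congrArg ψ (IsLocalization.mk'_spec L (1 : MvPolynomial (Fin N) K) d)
    rwa [map_mul, IsLocalization.lift_eq, IsLocalization.lift_eq, AlgHom.toRingHom_eq_coe,
      RingHom.coe_coe, weightHom_eq_one_of_mem_varMonoid hWB d.2, map_one, mul_one] at this
  have hψ_xPow : ψ (xPow K α W h) = Polynomial.X ^ ∑ i ∈ B, (α i).toNat := by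
    rw [xPow, map_mul, hψ_mk', mul_one, IsLocalization.lift_eq, AlgHom.toRingHom_eq_coe,
      RingHom.coe_coe, weightHom_prod_X_pow]
  intro hmem
  have hX : Polynomial.X ^ ∑ i ∈ B, (α i).toNat ∈
      Ideal.span {(Polynomial.X : Polynomial K) ^ k} := by
    refine map_weightHom_pow_mul_le (B := B) k J ?_
    rw [← hψ_xPow]
    have := Ideal.mem_map_of_mem ψ hmem
    rwa [Ideal.map_map, IsLocalization.lift_comp] at this
  rw [Ideal.mem_span_singleton,
    pow_dvd_pow_iff Polynomial.X_ne_zero Polynomial.not_isUnit_X] at hX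
  omega

theorem xPow_mem_map_varIdeal_pow_mul_pow_iff {α : Fin N → ℤ} (h : negSupp α ⊆ W) {k l : ℕ} :
    xPow K α W h ∈ (varIdeal K B ^ k * varIdeal K Bᶜ ^ l).map
      (algebraMap (MvPolynomial (Fin N) K) (Localization (varMonoid K W))) ↔
    (k ≤ ∑ i ∈ B, (α i).toNat ∨ ¬ Disjoint W B) ∧
      (l ≤ ∑ i ∈ Bᶜ, (α i).toNat ∨ ¬ Disjoint W Bᶜ) := by
  refine ⟨fun hmem => ?_, fun ⟨hB, hBc⟩ => ?_⟩
  · by_contra hcon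
    rw [not_and_or, not_or, not_or, not_le, not_le, not_not, not_not] at hcon
    rcases hcon with ⟨hk, hWB⟩ | ⟨hl, hWBc⟩
    · exact xPow_notMem_map_pow_mul h _ hWB hk hmem
    · rw [mul_comm] at hmem
      exact xPow_notMem_map_pow_mul h _ hWBc hl hmem
  · refine Ideal.mul_mem_right _ _ ?_
    rw [← prod_mul_prod_compl B, map_mul, Ideal.map_mul, Ideal.map_pow, Ideal.map_pow]
    exact Ideal.mul_mem_mul (algebraMap_prod_X_pow_mem_map_pow hB)
      (algebraMap_prod_X_pow_mem_map_pow hBc)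

end Localization

section Homology
variable {K} {Δ : Set (Finset (Fin N))}

theorem subsingleton_homologyAtLevel_iff {m : ℕ} :
    Subsingleton (homologyAtLevel K Δ m) ↔
      LinearMap.ker (bdryFrom K Δ m) ≤ LinearMap.range (bdry K Δ m) :=
  Submodule.Quotient.subsingleton_iff.trans Submodule.comap_subtype_eq_top

open Classical in
theorem bdry_single {m : ℕ} (F : {F : Finset (Fin N) // F ∈ Δ ∧ F.card = m + 1}) (c : K) :
    bdry K Δ m (Finsupp.single F c) =
      ∑ j ∈ F.1, ((-1 : K) ^ #{i ∈ F.1 | i < j}) •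
        (if hj : F.1.erase j ∈ Δ ∧ (F.1.erase j).card = m then
          Finsupp.single ⟨F.1.erase j, hj⟩ c else 0) := by
  rw [bdry, Finsupp.lsum_single, LinearMap.sum_apply, ← sum_attach F.1]
  refine sum_congr rfl fun j _ => ?_
  have hcard : (F.1.erase j).card = m := by simp [card_erase_of_mem j.2, F.2.2]
  by_cases hj : F.1.erase j ∈ Δ <;> simp [hj, hcard]

theorem bdry_zero_single (hempty : ∅ ∈ Δ) (σ : {F : Finset (Fin N) // F ∈ Δ ∧ F.card = 0 + 1})
    (c : K) :
    bdry K Δ 0 (Finsupp.single σ c) = Finsupp.single ⟨∅, hempty, card_empty⟩ c := by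
  obtain ⟨F, hF, hc⟩ := σ
  obtain ⟨v, rfl⟩ := card_eq_one.mp hc
  simp [bdry_single, hempty, filter_singleton, -Finsupp.single_mul]

theorem bdry_one_single_pair {u w : Fin N} (huw : u < w) (h : {u, w} ∈ Δ) (hu : {u} ∈ Δ)
    (hw : {w} ∈ Δ) (c : K) :
    bdry K Δ 1 (Finsupp.single ⟨{u, w}, h, card_pair huw.ne⟩ c) =
      Finsupp.single ⟨{w}, hw, card_singleton w⟩ c -
        Finsupp.single ⟨{u}, hu, card_singleton u⟩ c := by
  have herase : ({u, w} : Finset (Fin N)).erase w = {u} := by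
    rw [erase_insert_of_ne huw.ne, erase_singleton, insert_empty]
  simp [bdry_single, huw.ne, huw, filter_insert, filter_singleton, herase, hu, hw,
    not_lt_of_gt huw, sub_eq_add_neg, -Finsupp.single_mul]

theorem single_sub_single_mem_range_bdry {u w : Fin N} (h : {u, w} ∈ Δ) (hu : {u} ∈ Δ)
    (hw : {w} ∈ Δ) (c : K) :
    Finsupp.single ⟨{w}, hw, card_singleton w⟩ c - Finsupp.single ⟨{u}, hu, card_singleton u⟩ c ∈
      LinearMap.range (bdry K Δ 1) := by
  rcases lt_trichotomy u w with huw | rfl | hwu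
  · exact ⟨_, bdry_one_single_pair huw h hu hw c⟩
  · rw [sub_self]
    exact zero_mem _
  · have h' : {w, u} ∈ Δ := pair_comm u w ▸ h
    refine ⟨-Finsupp.single ⟨{w, u}, h', card_pair hwu.ne⟩ c, ?_⟩
    rw [map_neg, bdry_one_single_pair hwu h' hw hu, neg_sub]

theorem bdry_zero_apply (hempty : ∅ ∈ Δ) (z : chainModule K Δ (0 + 1)) :
    bdry K Δ 0 z = Finsupp.single ⟨∅, hempty, card_empty⟩ (z.sum fun _ c => c) := by
  induction z using Finsupp.induction_linear with
  | zero => simp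
  | add z w hz hw =>
    rw [map_add, hz, hw, Finsupp.sum_add_index' (fun _ => rfl) (fun _ _ _ => rfl),
      Finsupp.single_add]
  | single σ c => rw [bdry_zero_single hempty, Finsupp.sum_single_index rfl]

theorem subsingleton_homologyAtLevel_of_forall_card_ne {m : ℕ} (h : ∀ F ∈ Δ, F.card ≠ m) :
    Subsingleton (homologyAtLevel K Δ m) := by
  rw [subsingleton_homologyAtLevel_iff]
  intro z _
  convert zero_mem (LinearMap.range (bdry K Δ m))
  ext ⟨F, hF, hcard⟩
  exact absurd hcard (h F hF)

theorem subsingleton_homologyAtLevel_zero (h : ∅ ∈ Δ → ∃ v, {v} ∈ Δ) :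
    Subsingleton (homologyAtLevel K Δ 0) := by
  by_cases hempty : ∅ ∈ Δ
  · rw [subsingleton_homologyAtLevel_iff]
    intro z _
    obtain ⟨v, hv⟩ := h hempty
    refine ⟨Finsupp.single ⟨{v}, hv, card_singleton v⟩ (z ⟨∅, hempty, card_empty⟩), ?_⟩
    rw [bdry_zero_single hempty]
    ext ⟨F, hF, hcard⟩
    obtain rfl := card_eq_zero.mp hcard
    rw [Finsupp.single_eq_same]
  · exact subsingleton_homologyAtLevel_of_forall_card_ne fun F hF hcard =>
      hempty (card_eq_zero.mp hcard ▸ hF)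

theorem subsingleton_homologyAtLevel_one_of_cone (hΔ : DownClosed Δ) {v₀ : Fin N}
    (hv₀ : {v₀} ∈ Δ) (hcone : ∀ v, {v} ∈ Δ → {v, v₀} ∈ Δ) :
    Subsingleton (homologyAtLevel K Δ 1) := by
  have hempty : ∅ ∈ Δ := hΔ _ hv₀ _ (empty_subset _)
  set σ₀ : {F : Finset (Fin N) // F ∈ Δ ∧ F.card = 1} := ⟨{v₀}, hv₀, card_singleton v₀⟩
  have hsub (z : chainModule K Δ 1) :
      z - Finsupp.single σ₀ (z.sum fun _ c => c) ∈ LinearMap.range (bdry K Δ 1) := by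
    induction z using Finsupp.induction_linear with
    | zero => simp
    | add z w hz hw =>
      rw [Finsupp.sum_add_index' (fun _ => rfl) (fun _ _ _ => rfl), Finsupp.single_add,
        add_sub_add_comm]
      exact add_mem hz hw
    | single σ c =>
      obtain ⟨F, hF, hcard⟩ := σ
      obtain ⟨v, rfl⟩ := card_eq_one.mp hcard
      rw [Finsupp.sum_single_index rfl]
      exact single_sub_single_mem_range_bdry (pair_comm v v₀ ▸ hcone v hF) hv₀ hF c
  rw [subsingleton_homologyAtLevel_iff]
  intro z hz
  have hsum : (z.sum fun _ c => c) = 0 := by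
    rw [LinearMap.mem_ker] at hz
    change bdry K Δ 0 z = 0 at hz
    rwa [bdry_zero_apply hempty, Finsupp.single_eq_zero] at hz
  simpa [hsum] using hsub z

theorem nontrivial_homologyAtLevel_one_of_separated (hΔ : DownClosed Δ) (S : Finset (Fin N))
    (hside : ∀ F ∈ Δ, F ⊆ S ∨ Disjoint F S) {u w : Fin N} (hu : {u} ∈ Δ) (hw : {w} ∈ Δ)
    (huS : u ∈ S) (hwS : w ∉ S) : Nontrivial (homologyAtLevel K Δ 1) := by
  have hempty : ∅ ∈ Δ := hΔ _ hu _ (empty_subset _)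
  let φ : chainModule K Δ 1 →ₗ[K] K :=
    Finsupp.lsum K fun σ => if σ.1 ⊆ S then LinearMap.id else 0
  have hφ (σ : {F : Finset (Fin N) // F ∈ Δ ∧ F.card = 1}) (c : K) :
      φ (Finsupp.single σ c) = if σ.1 ⊆ S then c else 0 := by
    simp only [φ, Finsupp.lsum_single]
    split_ifs <;> rfl
  have hφ_bdry : φ ∘ₗ bdry K Δ 1 = 0 := by
    refine Finsupp.lhom_ext fun ⟨F, hF, hcard⟩ c => ?_
    obtain ⟨x, y, hxy, hF'⟩ : ∃ x y : Fin N, x < y ∧ F = {x, y} := by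
      obtain ⟨x, y, hxy, rfl⟩ := card_eq_two.mp hcard
      rcases hxy.lt_or_gt with h | h
      · exact ⟨x, y, h, rfl⟩
      · exact ⟨y, x, h, pair_comm x y⟩
    subst hF'
    have hx : {x} ∈ Δ := hΔ _ hF _ (by simp)
    have hy : {y} ∈ Δ := hΔ _ hF _ (by simp)
    rw [LinearMap.comp_apply, bdry_one_single_pair hxy hF hx hy, map_sub, hφ, hφ]
    rcases hside _ hF with hsub | hdisj
    · simp_all [insert_subset_iff]
    · simp_all [disjoint_insert_left]
  rw [← not_subsingleton_iff_nontrivial, subsingleton_homologyAtLevel_iff]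
  intro hle
  set z : chainModule K Δ 1 := Finsupp.single ⟨{u}, hu, card_singleton u⟩ 1 -
    Finsupp.single ⟨{w}, hw, card_singleton w⟩ 1
  have hz : z ∈ LinearMap.ker (bdryFrom K Δ 1) := by
    change bdry K Δ 0 z = 0
    rw [map_sub, bdry_zero_single hempty, bdry_zero_single hempty, sub_self]
  obtain ⟨y, hy⟩ := hle hz
  have := congrArg φ hy
  rw [← LinearMap.comp_apply, hφ_bdry, map_sub, hφ, hφ] at this
  simp [huS, hwS] at this

end Homology

section DegreeComplex
variable {K} {B : Finset (Fin N)} {k l : ℕ} {α : Fin N → ℤ}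

theorem mem_degreeComplex_varIdeal_pow_mul_pow_iff {F : Finset (Fin N)} :
    F ∈ degreeComplex K (varIdeal K B ^ k * varIdeal K Bᶜ ^ l) α ↔
      Disjoint F (negSupp α) ∧
        ((∑ i ∈ B, (α i).toNat < k ∧ Disjoint (F ∪ negSupp α) B) ∨
          (∑ i ∈ Bᶜ, (α i).toNat < l ∧ Disjoint (F ∪ negSupp α) Bᶜ)) := by
  rw [degreeComplex, Set.mem_ofPred_eq, xPow_mem_map_varIdeal_pow_mul_pow_iff]
  simp only [not_and_or, not_or, not_le, not_not]

theorem downClosed_degreeComplex_varIdeal_pow_mul_pow :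
    DownClosed (degreeComplex K (varIdeal K B ^ k * varIdeal K Bᶜ ^ l) α) := by
  intro F hF G hGF
  rw [mem_degreeComplex_varIdeal_pow_mul_pow_iff] at hF ⊢
  have hmono : G ∪ negSupp α ⊆ F ∪ negSupp α := union_subset_union hGF subset_rfl
  exact ⟨hF.1.mono_left hGF, hF.2.imp (And.imp_right (·.mono_left hmono))
    (And.imp_right (·.mono_left hmono))⟩

theorem sum_eq_add_of_negSupp_eq_empty (hα : negSupp α = ∅) :
    ∑ i, α i = ↑(∑ i ∈ B, (α i).toNat) + ↑(∑ i ∈ Bᶜ, (α i).toNat) := by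
  have hnonneg (i : Fin N) : 0 ≤ α i := by
    simpa [negSupp] using filter_eq_empty_iff.mp hα (mem_univ i)
  rw [← sum_add_sum_compl B, Nat.cast_sum, Nat.cast_sum]
  simp only [Int.toNat_of_nonneg (hnonneg _)]

theorem subsingleton_homologyAtLevel_zero_degreeComplex (hB : 1 < B.card) (hBc : 1 < Bᶜ.card)
    (hα : (negSupp α).card = 1) :
    Subsingleton (homologyAtLevel K
      (degreeComplex K (varIdeal K B ^ k * varIdeal K Bᶜ ^ l) α) 0) := by
  refine subsingleton_homologyAtLevel_zero fun hempty => ?_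
  obtain ⟨g, hg⟩ := card_eq_one.mp hα
  simp only [mem_degreeComplex_varIdeal_pow_mul_pow_iff, hg, empty_union,
    disjoint_singleton_left] at hempty ⊢
  rcases hempty.2 with ⟨ha, hgB⟩ | ⟨hb, hgBc⟩
  · obtain ⟨v, hv, hvg⟩ := exists_mem_ne hBc g
    exact ⟨v, by simp_all⟩
  · obtain ⟨v, hv, hvg⟩ := exists_mem_ne hB g
    exact ⟨v, by simp_all⟩

theorem subsingleton_homologyAtLevel_one_degreeComplex_of_le (hB : B.Nonempty)
    (hα : negSupp α = ∅) (ha : k ≤ ∑ i ∈ B, (α i).toNat) :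
    Subsingleton (homologyAtLevel K
      (degreeComplex K (varIdeal K B ^ k * varIdeal K Bᶜ ^ l) α) 1) := by
  have hΔ (F : Finset (Fin N)) : F ∈ degreeComplex K (varIdeal K B ^ k * varIdeal K Bᶜ ^ l) α ↔
      ∑ i ∈ Bᶜ, (α i).toNat < l ∧ F ⊆ B := by
    simp [mem_degreeComplex_varIdeal_pow_mul_pow_iff, hα, not_lt.mpr ha, disjoint_compl_right_iff]
  by_cases hb : ∑ i ∈ Bᶜ, (α i).toNat < l
  · obtain ⟨v₀, hv₀⟩ := hB
    refine subsingleton_homologyAtLevel_one_of_cone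
      downClosed_degreeComplex_varIdeal_pow_mul_pow (v₀ := v₀) ?_ ?_
    · simp [hΔ, hb, hv₀]
    · simp_all [insert_subset_iff]
  · exact subsingleton_homologyAtLevel_of_forall_card_ne fun F hF _ => hb ((hΔ F).mp hF).1

theorem nontrivial_homologyAtLevel_one_degreeComplex (hα : negSupp α = ∅)
    (ha : ∑ i ∈ B, (α i).toNat < k) (hb : ∑ i ∈ Bᶜ, (α i).toNat < l) {u w : Fin N}
    (hu : u ∈ B) (hw : w ∉ B) :
    Nontrivial (homologyAtLevel K
      (degreeComplex K (varIdeal K B ^ k * varIdeal K Bᶜ ^ l) α) 1) := by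
  have hΔ (F : Finset (Fin N)) :
      F ∈ degreeComplex K (varIdeal K B ^ k * varIdeal K Bᶜ ^ l) α ↔ Disjoint F B ∨ F ⊆ B := by
    simp [mem_degreeComplex_varIdeal_pow_mul_pow_iff, hα, ha, hb, disjoint_compl_right_iff]
  refine nontrivial_homologyAtLevel_one_of_separated
    downClosed_degreeComplex_varIdeal_pow_mul_pow B (fun F hF => ((hΔ F).mp hF).symm)
    (u := u) (w := w) ?_ ?_ hu hw
  · simp [hΔ, hu]
  · simp [hΔ, hw]

end DegreeComplex

section LocalCohomology
variable {K} {B : Finset (Fin N)} {k l : ℕ}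

theorem empty_mem_complexOfIdeal_iff {I : Ideal (MvPolynomial (Fin N) K)} :
    ∅ ∈ complexOfIdeal K I ↔ I ≠ ⊤ := by
  rw [complexOfIdeal, Set.mem_ofPred_eq, prod_empty, ← Ideal.eq_top_iff_one,
    Ideal.radical_eq_top]

theorem varIdeal_pow_mul_ne_top (hk : k ≠ 0) (J : Ideal (MvPolynomial (Fin N) K)) :
    varIdeal K B ^ k * J ≠ ⊤ := by
  intro htop
  have h := map_weightHom_pow_mul_le (B := B) k J
  rw [htop, Ideal.map_top, top_le_iff, Ideal.span_singleton_eq_top, isUnit_pow_iff hk] at h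
  exact Polynomial.not_isUnit_X h

theorem le_of_mem_localCohNonzeroDegrees_one (hB : 1 < B.card) (hBc : 1 < Bᶜ.card) {t : ℤ}
    (ht : t ∈ localCohNonzeroDegrees K 1 (varIdeal K B ^ k * varIdeal K Bᶜ ^ l)) :
    t ≤ k + l - 2 := by
  obtain ⟨α, rfl, -, m, hm, hnt⟩ := ht
  rw [← not_subsingleton_iff_nontrivial] at hnt
  have hcases : (m = 0 ∧ (negSupp α).card = 1) ∨ (m = 1 ∧ (negSupp α).card = 0) := by omega
  rcases hcases with ⟨rfl, hα⟩ | ⟨rfl, hα⟩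
  · exact absurd (subsingleton_homologyAtLevel_zero_degreeComplex hB hBc hα) hnt
  · rw [card_eq_zero] at hα
    rw [sum_eq_add_of_negSupp_eq_empty (B := B) hα]
    by_contra hlt
    rcases (by omega : k ≤ ∑ i ∈ B, (α i).toNat ∨ l ≤ ∑ i ∈ Bᶜ, (α i).toNat) with ha | hb
    · exact hnt (subsingleton_homologyAtLevel_one_degreeComplex_of_le
        (card_pos.mp (by omega)) hα ha)
    · have h := subsingleton_homologyAtLevel_one_degreeComplex_of_le (K := K) (k := l) (l := k)
        (card_pos.mp (by omega)) hα hb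
      rw [compl_compl, mul_comm] at h
      exact hnt h

theorem mem_localCohNonzeroDegrees_one (hk : k ≠ 0) (hl : l ≠ 0) {u w : Fin N} (hu : u ∈ B)
    (hw : w ∉ B) :
    (k + l - 2 : ℤ) ∈ localCohNonzeroDegrees K 1 (varIdeal K B ^ k * varIdeal K Bᶜ ^ l) := by
  set c : Fin N → ℕ := Pi.single u (k - 1) + Pi.single w (l - 1)
  have hα : negSupp (fun i => (c i : ℤ)) = ∅ := by simp [negSupp]
  refine ⟨fun i => c i, ?_, ?_, 1, by simp [hα], ?_⟩
  · rw [← Nat.cast_sum]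
    simp [c, sum_add_distrib]
    omega
  · rw [hα, empty_mem_complexOfIdeal_iff]
    exact varIdeal_pow_mul_ne_top hk _
  · refine nontrivial_homologyAtLevel_one_degreeComplex hα ?_ ?_ hu hw
    all_goals
      simp only [Int.toNat_natCast]
      simp [c, sum_add_distrib, sum_pi_single', hu, hw]
      omega

theorem aInvariant_one_varIdeal_pow_mul_pow (hB : 1 < B.card) (hBc : 1 < Bᶜ.card) (hk : k ≠ 0)
    (hl : l ≠ 0) :
    aInvariant K 1 (varIdeal K B ^ k * varIdeal K Bᶜ ^ l) = k + l - 2 := by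
  obtain ⟨u, hu⟩ := card_pos.mp (by omega : 0 < B.card)
  obtain ⟨w, hw⟩ := card_pos.mp (by omega : 0 < Bᶜ.card)
  exact IsGreatest.csSup_eq ⟨mem_localCohNonzeroDegrees_one hk hl hu (mem_compl.mp hw),
    fun _ ht => le_of_mem_localCohNonzeroDegrees_one hB hBc ht⟩

end LocalCohomology

/-- Let `S = K[x₁,…,x_s]` and `R = K[y₁,…,y_r]` with `s, r > 2`, `m`, `n`
their graded maximal ideals, and `T = K[x₁,…,x_s,y₁,…,y_r]` (realized as the polynomial
ring on `Fin (s+r)`, the first `s` variables being the `x`'s). Then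
`a₁(T/(m^k n^k)) = 2k − 2` for every positive integer `k`, where `a₁` is computed with
respect to the maximal graded ideal `m + n` of `T`. -/
theorem aInvariant_one_pow_mul_pow
    (s r : ℕ) (hs : 2 < s) (hr : 2 < r) (k : ℕ) (hk : 1 ≤ k) :
    aInvariant K 1
        ((Ideal.span {f : MvPolynomial (Fin (s + r)) K |
            ∃ i : Fin (s + r), (i : ℕ) < s ∧ f = X i}) ^ k *
          (Ideal.span {f : MvPolynomial (Fin (s + r)) K |
            ∃ i : Fin (s + r), s ≤ (i : ℕ) ∧ f = X i}) ^ k) =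
      2 * (k : ℤ) - 2 := by
  set B : Finset (Fin (s + r)) := {i | (i : ℕ) < s}
  have hx : Ideal.span {f : MvPolynomial (Fin (s + r)) K |
      ∃ i : Fin (s + r), (i : ℕ) < s ∧ f = X i} = varIdeal K B := by
    simp [varIdeal, B]
  have hy : Ideal.span {f : MvPolynomial (Fin (s + r)) K |
      ∃ i : Fin (s + r), s ≤ (i : ℕ) ∧ f = X i} = varIdeal K Bᶜ := by
    simp [varIdeal, B]
  have hB : B.card = s := by simp [B, Fin.card_filter_val_lt]
  have hBc : Bᶜ.card = r := by simp [card_compl, hB]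
  rw [hx, hy,
    aInvariant_one_varIdeal_pow_mul_pow (B := B) (by omega) (by omega) (by omega) (by omega)]
  ring
end

section
/- Let Δ be a k-dimensional simplicial complex on [s], I_Δ its Stanley-Reisner ideal, α ∈ ℕ^s, n ≥ 1, and F ⊆ [s] with |F| = k+1. Then F belongs to the degree complex Δ_α(I_Δ^n) if and only if F ∈ Δ and Σ_{i ∈ [s]∖F} α_i ≤ n − 1. -/
/-! Since `α ≥ 0`, `F ∈ Δ_α(I)` means that no `m · x^α` with `m` a monomial in the variables of `F`
lies in `I`. If `F ∉ Δ` then `x_F ∈ I_Δ`, so `x_F^n x^α ∈ I_Δ^n`. If `F` is a face of maximal size,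
every `x_i x_F` with `i ∉ F` is a non-face monomial, whence `x_F^σ x^α ∈ I_Δ^σ` for
`σ = ∑_{i ∉ F} α_i`. Conversely, for a face `F` we have `I_Δ ⊆ P_F`, and the specialization
`x_i ↦ 1` (`i ∈ F`), `x_i ↦ X` (`i ∉ F`) sends `P_F^n` into `(X^n)` and `m · x^α` to `X^σ`,
forcing `n ≤ σ`. -/

open MvPolynomial

variable (K : Type) [Field K] {N : ℕ}

lemma negSupp_natCast (α : Fin N → ℕ) : negSupp (fun i => (α i : ℤ)) = ∅ :=
  Finset.filter_false_of_mem fun i _ => by simp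

lemma prod_X_mem_varMonoid (W : Finset (Fin N)) :
    (∏ i ∈ W, X i : MvPolynomial (Fin N) K) ∈ varMonoid K W :=
  prod_mem fun _ hi => Submonoid.subset_closure (Set.mem_image_of_mem _ (Finset.mem_coe.mpr hi))

lemma xPow_mem_map_iff (α : Fin N → ℤ) (W : Finset (Fin N)) (h : negSupp α ⊆ W)
    (I : Ideal (MvPolynomial (Fin N) K)) :
    xPow K α W h ∈ I.map (algebraMap _ (Localization (varMonoid K W))) ↔
      ∃ m ∈ varMonoid K W, m * ∏ i, X i ^ (α i).toNat ∈ I := by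
  rw [xPow, IsLocalization.mul_mk'_eq_mk'_of_mul, mul_one,
    IsLocalization.mk'_mem_map_algebraMap_iff]

lemma mem_degreeComplex_natCast_iff (I : Ideal (MvPolynomial (Fin N) K)) (α : Fin N → ℕ)
    (F : Finset (Fin N)) :
    F ∈ degreeComplex K I (fun i => (α i : ℤ)) ↔
      ∀ m ∈ varMonoid K F, m * ∏ i, X i ^ α i ∉ I := by
  simp only [degreeComplex, Set.mem_ofPred_eq, xPow_mem_map_iff, negSupp_natCast,
    Finset.union_empty, Finset.disjoint_empty_right, Int.toNat_natCast, true_and, not_exists,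
    not_and]

section StanleyReisner

variable {K} {Δ : Set (Finset (Fin N))} {F : Finset (Fin N)}

lemma prod_X_mem_stanleyReisner (hF : F ∉ Δ) : ∏ i ∈ F, X i ∈ stanleyReisner K Δ :=
  Ideal.subset_span ⟨F, hF, rfl⟩

lemma stanleyReisner_le_facePrime (hΔ : DownClosed Δ) (hF : F ∈ Δ) :
    stanleyReisner K Δ ≤ facePrime K F := by
  rw [stanleyReisner, Ideal.span_le]
  rintro _ ⟨G, hG, rfl⟩
  obtain ⟨i, hiG, hiF⟩ : ∃ i ∈ G, i ∉ F :=
    Finset.not_subset.mp fun hGF => hG (hΔ F hF G hGF)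
  rw [SetLike.mem_coe, ← Finset.mul_prod_erase G _ hiG]
  exact Ideal.mul_mem_right _ _ (Ideal.subset_span ⟨i, hiF, rfl⟩)

lemma prod_X_pow_mul_mem_stanleyReisner_pow (hmax : ∀ i ∉ F, insert i F ∉ Δ) (α : Fin N → ℕ) :
    (∏ i ∈ F, X i) ^ (∑ i ∈ Fᶜ, α i) * ∏ i, X i ^ α i ∈
      (stanleyReisner K Δ ^ (∑ i ∈ Fᶜ, α i) : Ideal (MvPolynomial (Fin N) K)) := by
  have hsplit : (∏ i ∈ F, X i : MvPolynomial (Fin N) K) ^ (∑ i ∈ Fᶜ, α i) * ∏ i, X i ^ α i =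
      (∏ i ∈ F, X i ^ α i) * ∏ i ∈ Fᶜ, (X i * ∏ j ∈ F, X j) ^ α i := by
    simp only [mul_pow, Finset.prod_mul_distrib, Finset.prod_pow_eq_pow_sum,
      ← Finset.prod_mul_prod_compl F fun i => (X i : MvPolynomial (Fin N) K) ^ α i]
    ring
  rw [hsplit, ← Finset.prod_pow_eq_pow_sum]
  refine Ideal.mul_mem_left _ _ (Ideal.prod_mem_prod fun i hi => Ideal.pow_mem_pow ?_ _)
  have hi : i ∉ F := Finset.mem_compl.mp hi
  rw [← Finset.prod_insert hi]
  exact prod_X_mem_stanleyReisner (hmax i hi)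

end StanleyReisner

section FaceSpecialization

variable {K} {F : Finset (Fin N)}

noncomputable def faceSpecialization (F : Finset (Fin N)) :
    MvPolynomial (Fin N) K →ₐ[K] Polynomial K :=
  aeval fun i => if i ∈ F then 1 else Polynomial.X

lemma faceSpecialization_X (i : Fin N) :
    faceSpecialization F (X i : MvPolynomial (Fin N) K) = if i ∈ F then 1 else Polynomial.X :=
  aeval_X _ i

lemma faceSpecialization_eq_one {m : MvPolynomial (Fin N) K} (hm : m ∈ varMonoid K F) :
    faceSpecialization F m = 1 := by
  induction hm using Submonoid.closure_induction with
  | mem x hx =>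
    obtain ⟨i, hi, rfl⟩ := hx
    rw [faceSpecialization_X, if_pos (Finset.mem_coe.mp hi)]
  | one => exact map_one _
  | mul x y _ _ hx hy => rw [map_mul, hx, hy, one_mul]

lemma faceSpecialization_prod_X_pow (α : Fin N → ℕ) :
    faceSpecialization F (∏ i, X i ^ α i : MvPolynomial (Fin N) K) =
      Polynomial.X ^ ∑ i ∈ Fᶜ, α i := by
  rw [map_prod, ← Finset.prod_mul_prod_compl F, ← Finset.prod_pow_eq_pow_sum,
    Finset.prod_eq_one fun i hi => by rw [map_pow, faceSpecialization_X, if_pos hi, one_pow],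
    one_mul]
  exact Finset.prod_congr rfl fun i hi => by
    rw [map_pow, faceSpecialization_X, if_neg (Finset.mem_compl.mp hi)]

lemma map_facePrime_pow_le (n : ℕ) :
    (facePrime K F ^ n).map (faceSpecialization F) ≤ Ideal.span {Polynomial.X ^ n} := by
  rw [Ideal.map_pow, ← Ideal.span_singleton_pow]
  refine Ideal.pow_right_mono ?_ n
  rw [facePrime, Ideal.map_span, Ideal.span_le]
  rintro _ ⟨_, ⟨i, hi, rfl⟩, rfl⟩
  rw [SetLike.mem_coe, faceSpecialization_X, if_neg hi]
  exact Ideal.subset_span rfl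

lemma le_sum_compl_of_mul_mem_facePrime_pow {m : MvPolynomial (Fin N) K}
    (hm : m ∈ varMonoid K F) {α : Fin N → ℕ} {n : ℕ}
    (hmem : m * ∏ i, X i ^ α i ∈ facePrime K F ^ n) : n ≤ ∑ i ∈ Fᶜ, α i := by
  have hX := map_facePrime_pow_le n (Ideal.mem_map_of_mem (faceSpecialization F) hmem)
  rw [map_mul, faceSpecialization_eq_one hm, one_mul, faceSpecialization_prod_X_pow,
    Ideal.mem_span_singleton] at hX
  exact (pow_dvd_pow_iff Polynomial.X_ne_zero Polynomial.not_isUnit_X).mp hX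

end FaceSpecialization

theorem mem_degreeComplex_pow_iff
    (Δ : Set (Finset (Fin N))) (hΔ : DownClosed Δ) (k : ℕ)
    (hdim : ∀ G ∈ Δ, G.card ≤ k + 1)
    (α : Fin N → ℕ) (n : ℕ)
    (F : Finset (Fin N)) (hF : F.card = k + 1) :
    F ∈ degreeComplex K ((stanleyReisner K Δ) ^ n) (fun i => (α i : ℤ)) ↔
      F ∈ Δ ∧ (∑ i ∈ Fᶜ, (α i : ℤ)) ≤ (n : ℤ) - 1 := by
  rw [mem_degreeComplex_natCast_iff, ← Nat.cast_sum]
  constructor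
  · intro hnot
    by_cases hFΔ : F ∈ Δ
    · refine ⟨hFΔ, ?_⟩
      by_contra! hsum
      have hmax : ∀ i ∉ F, insert i F ∉ Δ := fun i hi hmem => by
        have := hdim _ hmem
        rw [Finset.card_insert_of_notMem hi, hF] at this
        omega
      exact hnot _ (pow_mem (prod_X_mem_varMonoid K F) _)
        (Ideal.pow_le_pow_right (by omega) (prod_X_pow_mul_mem_stanleyReisner_pow hmax α))
    · exact (hnot _ (pow_mem (prod_X_mem_varMonoid K F) n)
        (Ideal.mul_mem_right _ _ (Ideal.pow_mem_pow (prod_X_mem_stanleyReisner hFΔ) n))).elim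
  · rintro ⟨hFΔ, hsum⟩ m hm hmem
    have := le_sum_compl_of_mul_mem_facePrime_pow hm
      (Ideal.pow_right_mono (stanleyReisner_le_facePrime hΔ hFΔ) n hmem)
    omega
end

section
/- Let Δ be a k-dimensional simplicial complex on [s], I_Δ its Stanley-Reisner ideal in S = K[x_1,…,x_s]. Then for every positive integer n, a_{k+1}(S/I_Δ^{(n)}) ≤ (k+2)(n−1). -/
open MvPolynomial

variable (K : Type) [Field K] {N : ℕ}

/-! By Takayama's formula a degree `t = ∑ α` of `H^{k+1}_m(S/I_Δ^{(n)})` comes with a nonzero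
cycle `z` of `Δ_α` on faces `F` with `|F| + |G_α| = k + 1`. Such a face `F` survives in `Δ_α` only
if the entries of `α` outside `F ∪ G_α` add up to at most `n - 1`: otherwise
`x^α · ∏_{i ∈ F ∪ G_α} x_i^n` lies in every `P_{F'}^n`, `F'` a facet, so `x^α` dies after
inverting the variables of `F ∪ G_α`. If `F` is in the support of `z` and `i ∈ F`, the
coefficient of `∂z` at `F ∖ {i}` shows that some face of the support misses `i`, whence
`α_i ≤ n - 1`. Summing, `t ≤ |F| (n - 1) + (n - 1) ≤ (k + 2)(n - 1)`, the negative entries of `α`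
only lowering the sum. -/

lemma mem_negSupp {α : Fin N → ℤ} {i : Fin N} : i ∈ negSupp α ↔ α i < 0 := by
  simp [negSupp]

lemma sum_le_sum_add_sum_compl_union_negSupp (α : Fin N → ℤ) {F : Finset (Fin N)}
    (hF : Disjoint F (negSupp α)) :
    ∑ i, α i ≤ ∑ i ∈ F, α i + ∑ i ∈ (F ∪ negSupp α)ᶜ, α i := by
  have hneg : ∑ i ∈ negSupp α, α i ≤ 0 :=
    Finset.sum_nonpos fun i hi => (mem_negSupp.mp hi).le
  rw [← Finset.sum_add_sum_compl (F ∪ negSupp α), Finset.sum_union hF]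
  linarith

lemma single_le_sum_compl_union_negSupp (α : Fin N → ℤ) {F : Finset (Fin N)} {i : Fin N}
    (hi : i ∉ F ∪ negSupp α) : α i ≤ ∑ j ∈ (F ∪ negSupp α)ᶜ, α j := by
  refine Finset.single_le_sum (fun j hj => ?_) (Finset.mem_compl.mpr hi)
  have hj : j ∉ negSupp α := fun h => Finset.mem_compl.mp hj (Finset.mem_union_right F h)
  exact not_lt.mp (mt mem_negSupp.mpr hj)

lemma X_mem_facePrime {F : Finset (Fin N)} {i : Fin N} (hi : i ∉ F) :
    (X i : MvPolynomial (Fin N) K) ∈ facePrime K F :=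
  Ideal.subset_span ⟨i, hi, rfl⟩

lemma prod_X_pow_mem_facePrime_pow {F : Finset (Fin N)} {c : Fin N → ℕ} {n : ℕ}
    (hc : n ≤ ∑ i ∈ Fᶜ, c i) :
    (∏ i, (X i : MvPolynomial (Fin N) K) ^ c i) ∈ facePrime K F ^ n := by
  have h : (∏ i ∈ Fᶜ, (X i : MvPolynomial (Fin N) K) ^ c i) ∈ facePrime K F ^ ∑ i ∈ Fᶜ, c i := by
    rw [← Finset.prod_pow_eq_pow_sum]
    exact Ideal.prod_mem_prod fun i hi =>
      Ideal.pow_mem_pow (X_mem_facePrime K (Finset.mem_compl.mp hi)) _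
  exact Ideal.mem_of_dvd _ (Finset.prod_dvd_prod_of_subset _ _ _ (Finset.subset_univ _))
    (Ideal.pow_le_pow_right hc h)

/-- A facet either contains `W`, and then equals it by dimension, or misses a vertex of `W`. -/
lemma prod_X_pow_mul_prod_mem_symbolicPowerSR {Δ : Set (Finset (Fin N))} {k n : ℕ}
    (hdim : ∀ G ∈ Δ, G.card ≤ k + 1) {W : Finset (Fin N)} (hW : W.card = k + 1)
    {c : Fin N → ℕ} (hc : n ≤ ∑ i ∈ Wᶜ, c i) :
    (∏ i, (X i : MvPolynomial (Fin N) K) ^ c i) * ∏ i ∈ W, X i ^ n ∈ symbolicPowerSR K Δ n := by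
  simp only [symbolicPowerSR, Ideal.mem_iInf]
  intro F hF
  by_cases hWF : W ⊆ F
  · obtain rfl : W = F := Finset.eq_of_subset_of_card_le hWF (hW ▸ hdim F hF.1)
    exact Ideal.mul_mem_right _ _ (prod_X_pow_mem_facePrime_pow K hc)
  · obtain ⟨j, hjW, hjF⟩ := Finset.not_subset.mp hWF
    refine Ideal.mul_mem_left _ _ (Ideal.mem_of_dvd _ (Finset.dvd_prod_of_mem _ hjW) ?_)
    exact Ideal.pow_mem_pow (X_mem_facePrime K hjF) n

lemma xPow_mem_map_of_mul_mem {I : Ideal (MvPolynomial (Fin N) K)} {α : Fin N → ℤ}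
    {W : Finset (Fin N)} (h : negSupp α ⊆ W) {t : MvPolynomial (Fin N) K}
    (ht : t ∈ varMonoid K W) (hmem : (∏ i, X i ^ (α i).toNat) * t ∈ I) :
    xPow K α W h ∈ I.map (algebraMap _ (Localization (varMonoid K W))) := by
  refine Ideal.mul_mem_right _ _ ?_
  rw [IsLocalization.algebraMap_mem_map_algebraMap_iff (varMonoid K W)]
  exact ⟨t, ht, mul_comm t _ ▸ hmem⟩

lemma sum_compl_le_of_mem_degreeComplex {Δ : Set (Finset (Fin N))} {k n : ℕ}
    (hdim : ∀ G ∈ Δ, G.card ≤ k + 1) {α : Fin N → ℤ} {F : Finset (Fin N)}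
    (hF : F ∈ degreeComplex K (symbolicPowerSR K Δ n) α)
    (hcard : (F ∪ negSupp α).card = k + 1) :
    ∑ i ∈ (F ∪ negSupp α)ᶜ, α i ≤ n - 1 := by
  by_contra! hlt
  have hsum : n ≤ ∑ i ∈ (F ∪ negSupp α)ᶜ, (α i).toNat := by
    zify
    calc (n : ℤ) ≤ ∑ i ∈ (F ∪ negSupp α)ᶜ, α i := by omega
      _ ≤ ∑ i ∈ (F ∪ negSupp α)ᶜ, ((α i).toNat : ℤ) :=
        Finset.sum_le_sum fun i _ => Int.self_le_toNat (α i)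
  refine hF.2 (xPow_mem_map_of_mul_mem K _ (t := ∏ i ∈ F ∪ negSupp α, X i ^ n) ?_
    (prod_X_pow_mul_prod_mem_symbolicPowerSR K hdim hcard hsum))
  exact Submonoid.prod_mem _ fun i hi =>
    pow_mem (Submonoid.subset_closure (Set.mem_image_of_mem _ (Finset.mem_coe.mpr hi))) _

lemma varMonoid_mono {W₁ W₂ : Finset (Fin N)} (h : W₁ ⊆ W₂) :
    varMonoid K W₁ ≤ varMonoid K W₂ :=
  Submonoid.closure_mono (Set.image_mono (Finset.coe_subset.mpr h))

lemma degreeComplex_downClosed (I : Ideal (MvPolynomial (Fin N) K)) (α : Fin N → ℤ) :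
    DownClosed (degreeComplex K I α) := by
  rintro F ⟨hdisj, hF⟩ G hGF
  refine ⟨hdisj.mono_left hGF, fun hG => hF ?_⟩
  have hle : varMonoid K (G ∪ negSupp α) ≤
      (varMonoid K (F ∪ negSupp α)).comap (RingHom.id _) :=
    varMonoid_mono K (Finset.union_subset_union_left hGF)
  let φ := IsLocalization.map (S := Localization (varMonoid K (G ∪ negSupp α)))
    (Localization (varMonoid K (F ∪ negSupp α))) (RingHom.id _) hle
  have hx : φ (xPow K α (G ∪ negSupp α) Finset.subset_union_right) =
      xPow K α (F ∪ negSupp α) Finset.subset_union_right := by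
    rw [xPow, xPow, map_mul, IsLocalization.map_eq, IsLocalization.map_mk']
    rfl
  have himg := Ideal.mem_map_of_mem φ hG
  rwa [Ideal.map_map, IsLocalization.map_comp, RingHom.comp_id, hx] at himg

open Classical in
lemma bdry_apply (Γ : Set (Finset (Fin N))) (m : ℕ) (z : chainModule K Γ (m + 1))
    (b : {G : Finset (Fin N) // G ∈ Γ ∧ G.card = m}) :
    bdry K Γ m z b = ∑ G ∈ z.support, ∑ j ∈ G.1.attach,
      if G.1.erase j.1 = b.1 then (-1 : K) ^ (G.1.filter (· < j.1)).card * z G else 0 := by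
  simp only [bdry, Finsupp.lsum_apply, Finsupp.sum, Finsupp.finsetSum_apply,
    LinearMap.sum_apply, LinearMap.smul_apply, Finsupp.smul_apply]
  refine Finset.sum_congr rfl fun G _ => Finset.sum_congr rfl fun j _ => ?_
  split_ifs with hΓ hb hb
  · simp [hb]
  · simp [Subtype.ext_iff, hb]
  · exact absurd (hb ▸ b.2.1) hΓ
  · simp

lemma exists_mem_support_notMem_of_bdryFrom_eq_zero {Γ : Set (Finset (Fin N))}
    (hΓ : DownClosed Γ) {m : ℕ} {z : chainModule K Γ m} (hz : bdryFrom K Γ m z = 0)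
    {F : {F : Finset (Fin N) // F ∈ Γ ∧ F.card = m}} (hF : F ∈ z.support)
    {i : Fin N} (hi : i ∈ F.1) :
    ∃ G ∈ z.support, i ∉ G.1 := by
  cases m with
  | zero => simp [Finset.card_eq_zero.mp F.2.2] at hi
  | succ m =>
  by_contra! hcon
  let b : {G : Finset (Fin N) // G ∈ Γ ∧ G.card = m} :=
    ⟨F.1.erase i, hΓ _ F.2.1 _ (Finset.erase_subset _ _), by simp [hi, F.2.2]⟩
  have hb : bdry K Γ m z b = 0 := DFunLike.congr_fun hz b
  rw [bdry_apply, Finset.sum_eq_single_of_mem F hF, Finset.sum_eq_single_of_mem ⟨i, hi⟩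
    (Finset.mem_attach _ _)] at hb
  · rw [if_pos rfl] at hb
    exact Finsupp.mem_support_iff.mp hF (by simpa using hb)
  · rintro j - hji
    rw [if_neg fun h => hji (Subtype.ext ((Finset.erase_inj _ j.2).mp h))]
  · refine fun G hG hGF => Finset.sum_eq_zero fun j _ => if_neg fun h => hGF ?_
    change G.1.erase j.1 = F.1.erase i at h
    have hj : j.1 = i := by
      by_contra hji
      exact Finset.notMem_erase i F.1 (h ▸ Finset.mem_erase.mpr ⟨Ne.symm hji, hcon G hG⟩)
    exact Subtype.ext (Finset.erase_injOn' i (hcon G hG) hi (hj ▸ h))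

lemma exists_ne_zero_mem_ker_of_nontrivial_homologyAtLevel {Γ : Set (Finset (Fin N))} {m : ℕ}
    (h : Nontrivial (homologyAtLevel K Γ m)) :
    ∃ z ∈ LinearMap.ker (bdryFrom K Γ m), z ≠ 0 := by
  let _ : HasQuotient (LinearMap.ker (bdryFrom K Γ m)) (Submodule K (LinearMap.ker (bdryFrom K Γ m))) :=
    Submodule.hasQuotient (R := K) (M := LinearMap.ker (bdryFrom K Γ m))
  have _ : Nontrivial (LinearMap.ker (bdryFrom K Γ m) ⧸
    (LinearMap.range (bdry K Γ m)).comap (LinearMap.ker (bdryFrom K Γ m)).subtype) := h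
  obtain ⟨q, hq⟩ := exists_ne (0 : LinearMap.ker (bdryFrom K Γ m) ⧸
    (LinearMap.range (bdry K Γ m)).comap (LinearMap.ker (bdryFrom K Γ m)).subtype)
  obtain ⟨z, rfl⟩ := Submodule.Quotient.mk_surjective _ q
  refine ⟨z, z.2, fun hz => hq ?_⟩
  rw [show z = 0 from Subtype.ext hz, Submodule.Quotient.mk_zero]

lemma le_of_mem_localCohNonzeroDegrees_symbolicPowerSR {Δ : Set (Finset (Fin N))} {k n : ℕ}
    (hdim : ∀ G ∈ Δ, G.card ≤ k + 1) (hn : 1 ≤ n) :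
    ∀ t ∈ localCohNonzeroDegrees K (k + 1) (symbolicPowerSR K Δ n),
      t ≤ (k + 2) * ((n : ℤ) - 1) := by
  rintro _ ⟨α, rfl, -, m, hm, hH⟩
  obtain ⟨z, hz, hz0⟩ := exists_ne_zero_mem_ker_of_nontrivial_homologyAtLevel K hH
  obtain ⟨F, hF⟩ := Finsupp.support_nonempty_iff.mpr hz0
  have hcard : m + (negSupp α).card = k + 1 := by push_cast at hm; omega
  have hout : ∀ G : {G // G ∈ degreeComplex K (symbolicPowerSR K Δ n) α ∧ G.card = m},
      ∑ i ∈ (G.1 ∪ negSupp α)ᶜ, α i ≤ n - 1 := fun G =>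
    sum_compl_le_of_mem_degreeComplex K hdim G.2.1
      (by rw [Finset.card_union_of_disjoint G.2.1.1, G.2.2, hcard])
  have hface : ∀ i ∈ F.1, α i ≤ n - 1 := fun i hi => by
    obtain ⟨G, -, hiG⟩ := exists_mem_support_notMem_of_bdryFrom_eq_zero K
      (degreeComplex_downClosed K _ α) hz hF hi
    have hiα : i ∉ negSupp α := Finset.disjoint_left.mp F.2.1.1 hi
    exact (single_le_sum_compl_union_negSupp α (by simp [hiG, hiα])).trans (hout G)
  have hn1 : (0 : ℤ) ≤ n - 1 := by omega
  calc ∑ i, α i ≤ ∑ i ∈ F.1, α i + ∑ i ∈ (F.1 ∪ negSupp α)ᶜ, α i :=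
        sum_le_sum_add_sum_compl_union_negSupp α F.2.1.1
    _ ≤ m * (n - 1) + (n - 1) := by
        gcongr
        · simpa [F.2.2] using Finset.sum_le_card_nsmul F.1 α _ hface
        · exact hout F
    _ ≤ (k + 2) * (n - 1) := by
        have hm : (m : ℤ) ≤ k + 1 := by omega
        nlinarith

/-- The hypothesis `0 ≤ b` covers the empty case, where `sSup ∅ = 0` in `ℤ`. -/
lemma aInvariant_le_of_forall_le {i : ℕ} {I : Ideal (MvPolynomial (Fin N) K)} {b : ℤ}
    (hb : 0 ≤ b) (h : ∀ t ∈ localCohNonzeroDegrees K i I, t ≤ b) : aInvariant K i I ≤ b := by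
  rcases (localCohNonzeroDegrees K i I).eq_empty_or_nonempty with he | hne
  · rwa [aInvariant, he, Int.csSup_empty]
  · exact csSup_le hne h

theorem aInvariant_symbolicPower_le
    (Δ : Set (Finset (Fin N))) (k : ℕ)
    (hdim : ∀ G ∈ Δ, G.card ≤ k + 1)
    (n : ℕ) (hn : 1 ≤ n) :
    (∀ t ∈ localCohNonzeroDegrees K (k + 1) (symbolicPowerSR K Δ n),
        t ≤ (k + 2) * ((n : ℤ) - 1)) ∧
      aInvariant K (k + 1) (symbolicPowerSR K Δ n) ≤ (k + 2) * ((n : ℤ) - 1) := by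
  have hbound := le_of_mem_localCohNonzeroDegrees_symbolicPowerSR K hdim hn
  have hn' : (0 : ℤ) ≤ n - 1 := by omega
  exact ⟨hbound, aInvariant_le_of_forall_le K (by positivity) hbound⟩
end
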